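/- arXiv:1701.05403 — 3 statements merged into one kernel-verified Lean document; each statement's English description precedes it below -/
import Mathlib

section
/- For all p, q, u, v ∈ [0,1] and every input bit a : Bool, sampling can be traded arbitrarily between pre-sampling and post-sampling around randomized response: as an equality of probability mass functions on Option Bool, pre-sampling with probability u·v followed by randomized response equals pre-sampling with probability u, then randomized response, then post-sampling with probability v; formally, (PMF.bernoulli (u*v)).bind (fun keep => if keep then (RR p q a).map some else PMF.pure none) = (PMF.bernoulli u).bind (fun keep => if keep then (RR p q a).bind (fun b => (PMF.bernoulli v).bind (fun keep2 => if keep2 then PMF.pure (some b) else PMF.pure none)) else PMF.pure none). -/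
/-!
Randomized response acts on the kept row independently of the sampling coins, so a
post-sampling coin can be tossed before randomized response instead of after it; and two
successive independent keep-coins with rates `u` and `v` amount to a single one with rate `u * v`.
-/

/-- Two-coin randomized response: with probability `p` report the true bit `a`,
otherwise report an independent biased coin coming up `true` with probability `q`. -/
noncomputable def RR (p q : ℝ) (hp : p ≤ 1) (hq : q ≤ 1) (a : Bool) : PMF Bool :=
  (PMF.bernoulli (Real.toNNReal p) (Real.toNNReal_le_one.mpr hp)).bind
    (fun heads => if heads then PMF.pure a
      else PMF.bernoulli (Real.toNNReal q) (Real.toNNReal_le_one.mpr hq))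

open scoped NNReal

namespace PMF
variable {α : Type*}

theorem bernoulli_bind_ite_bernoulli {p q : ℝ≥0} (hp : p ≤ 1) (hq : q ≤ 1) :
    (bernoulli p hp).bind (fun k => if k then bernoulli q hq else pure false)
      = bernoulli (p * q) (mul_le_one' hp hq) := by
  have hfalse : p * (1 - q) + (1 - p) = 1 - p * q := by
    rw [← NNReal.coe_inj]
    push_cast [NNReal.coe_sub hp, NNReal.coe_sub hq, NNReal.coe_sub (mul_le_one' hp hq)]
    ring
  ext b
  cases b <;> simp [bind_apply, bernoulli_apply]
  · exact_mod_cast hfalse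

/-- The paper's `Sam(·, s)` on a single row: `none` marks a discarded row. -/
noncomputable def sample (s : ℝ≥0) (hs : s ≤ 1) (μ : PMF α) : PMF (Option α) :=
  (bernoulli s hs).bind fun keep => if keep then μ.map some else pure none

theorem sample_mul {s t : ℝ≥0} (hs : s ≤ 1) (ht : t ≤ 1) (μ : PMF α) :
    sample (s * t) (mul_le_one' hs ht) μ
      = (bernoulli s hs).bind fun keep => if keep then sample t ht μ else pure none := by
  rw [sample, ← bernoulli_bind_ite_bernoulli hs ht, bind_bind]
  congr 1; funext keep
  cases keep <;> simp [sample]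

theorem bind_sample_pure (s : ℝ≥0) (hs : s ≤ 1) (μ : PMF α) :
    μ.bind (fun b => (bernoulli s hs).bind
        fun keep => if keep then pure (some b) else pure none) = sample s hs μ := by
  rw [sample, bind_comm]
  congr 1; funext keep
  cases keep <;> simp [bind_const, map, Function.comp_def]

end PMF

theorem presample_mul_RR_eq_presample_RR_postsample_general
    (p q u v : ℝ) (hp1 : p ≤ 1) (hq1 : q ≤ 1)
    (hu0 : 0 ≤ u) (hu1 : u ≤ 1) (hv0 : 0 ≤ v) (hv1 : v ≤ 1) (a : Bool) :
    (PMF.bernoulli (Real.toNNReal (u * v))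
          (Real.toNNReal_le_one.mpr (mul_le_one₀ hu1 hv0 hv1))).bind
        (fun keep => if keep then (RR p q hp1 hq1 a).map some else PMF.pure none)
      = (PMF.bernoulli (Real.toNNReal u) (Real.toNNReal_le_one.mpr hu1)).bind
          (fun keep => if keep then
              (RR p q hp1 hq1 a).bind (fun b =>
                (PMF.bernoulli (Real.toNNReal v) (Real.toNNReal_le_one.mpr hv1)).bind
                  (fun keep2 => if keep2 then PMF.pure (some b) else PMF.pure none))
            else PMF.pure none) := by
  have hmul : (u * v).toNNReal = u.toNNReal * v.toNNReal := Real.toNNReal_mul hu0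
  change PMF.sample _ _ (RR p q hp1 hq1 a) = _
  simp only [hmul, PMF.sample_mul (Real.toNNReal_le_one.mpr hu1) (Real.toNNReal_le_one.mpr hv1),
    PMF.bind_sample_pure]

/-- Arbitrary sampling around randomized response (Corollary 1, first equality):
pre-sampling with probability `u*v` followed by randomized response equals pre-sampling
with probability `u`, then randomized response, then post-sampling with probability `v`. -/
theorem presample_mul_RR_eq_presample_RR_postsample
    (p q u v : ℝ) (hp0 : 0 ≤ p) (hp1 : p ≤ 1) (hq0 : 0 ≤ q) (hq1 : q ≤ 1)
    (hu0 : 0 ≤ u) (hu1 : u ≤ 1) (hv0 : 0 ≤ v) (hv1 : v ≤ 1) (a : Bool) :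
    (PMF.bernoulli (Real.toNNReal (u * v))
          (Real.toNNReal_le_one.mpr (mul_le_one₀ hu1 hv0 hv1))).bind
        (fun keep => if keep then (RR p q hp1 hq1 a).map some else PMF.pure none)
      = (PMF.bernoulli (Real.toNNReal u) (Real.toNNReal_le_one.mpr hu1)).bind
          (fun keep => if keep then
              (RR p q hp1 hq1 a).bind (fun b =>
                (PMF.bernoulli (Real.toNNReal v) (Real.toNNReal_le_one.mpr hv1)).bind
                  (fun keep2 => if keep2 then PMF.pure (some b) else PMF.pure none))
            else PMF.pure none) :=
  presample_mul_RR_eq_presample_RR_postsample_general p q u v hp1 hq1 hu0 hu1 hv0 hv1 a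
end

section
/- For all p, q, u, v ∈ [0,1] and every input bit a : Bool, pre-sampling with probability u, then randomized response, then post-sampling with probability v yields the same output distribution as randomized response followed by post-sampling with probability u·v; formally, as probability mass functions on Option Bool, (PMF.bernoulli u).bind (fun keep => if keep then (RR p q a).bind (fun b => (PMF.bernoulli v).bind (fun keep2 => if keep2 then PMF.pure (some b) else PMF.pure none)) else PMF.pure none) = (RR p q a).bind (fun b => (PMF.bernoulli (u*v)).bind (fun keep => if keep then PMF.pure (some b) else PMF.pure none)). -/
/-! Subsampling with probability `s` is Bernoulli thinning. Two successive thinnings with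
probabilities `u` and `v` form one thinning with probability `u * v`, since the conjunction of
independent `Bernoulli u` and `Bernoulli v` coins is a `Bernoulli (u * v)` coin. The pre-sampling
coin is independent of the mechanism, so it can be moved past it to meet the post-sampling coin;
nothing about randomized response is used beyond it being a distribution. -/

open NNReal

set_option linter.deprecated false

namespace PMF

variable {α : Type*} {u v : ℝ≥0} (hu : u ≤ 1) (hv : v ≤ 1)

theorem bernoulli_bind_ite_bernoulli_pure_false :
    (bernoulli u hu).bind (fun k => if k then bernoulli v hv else pure false)
      = bernoulli (u * v) (mul_le_one' hu hv) := by
  ext k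
  cases k
  · simp only [bind_apply, tsum_bool, bernoulli_apply, pure_apply, cond_false, cond_true,
      if_true, if_false, Bool.false_eq_true, mul_one]
    norm_cast
    rw [← NNReal.coe_inj]
    push_cast [hu, hv, mul_le_one' hu hv]
    ring
  · simp [bernoulli_apply]

noncomputable def subsample (s : ℝ≥0) (hs : s ≤ 1) (b : α) : PMF (Option α) :=
  (bernoulli s hs).bind fun keep => if keep then pure (some b) else pure none

theorem bernoulli_bind_ite_subsample (b : α) :
    (bernoulli u hu).bind (fun k : Bool => if k then subsample v hv b else pure none)
      = subsample (u * v) (mul_le_one' hu hv) b := by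
  have h : (fun k : Bool => if k then subsample v hv b else pure none) = fun k =>
      (if k then bernoulli v hv else pure false).bind
        fun keep => if keep then pure (some b) else pure none := by
    funext k
    cases k <;> simp [subsample]
  rw [h, ← bind_bind, bernoulli_bind_ite_bernoulli_pure_false, subsample]

theorem bernoulli_bind_ite_bind_subsample (μ : PMF α) :
    (bernoulli u hu).bind (fun k => if k then μ.bind (subsample v hv) else pure none)
      = μ.bind (subsample (u * v) (mul_le_one' hu hv)) := calc
  _ = (bernoulli u hu).bind fun k => μ.bind fun b =>
        if k then subsample v hv b else pure none := by
    congr; funext k; cases k <;> simp [bind_const]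
  _ = μ.bind fun b => (bernoulli u hu).bind fun k =>
        if k then subsample v hv b else pure none := bind_comm _ _ _
  _ = _ := by simp_rw [bernoulli_bind_ite_subsample]

end PMF

theorem presample_RR_postsample_eq_RR_postsample_mul_general
    (p q u v : ℝ) (hp1 : p ≤ 1) (hq1 : q ≤ 1)
    (hu0 : 0 ≤ u) (hu1 : u ≤ 1) (hv0 : 0 ≤ v) (hv1 : v ≤ 1) (a : Bool) :
    (PMF.bernoulli (Real.toNNReal u) (Real.toNNReal_le_one.mpr hu1)).bind
        (fun keep => if keep then
            (RR p q hp1 hq1 a).bind (fun b =>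
              (PMF.bernoulli (Real.toNNReal v) (Real.toNNReal_le_one.mpr hv1)).bind
                (fun keep2 => if keep2 then PMF.pure (some b) else PMF.pure none))
          else PMF.pure none)
      = (RR p q hp1 hq1 a).bind (fun b =>
          (PMF.bernoulli (Real.toNNReal (u * v))
              (Real.toNNReal_le_one.mpr (mul_le_one₀ hu1 hv0 hv1))).bind
            (fun keep => if keep then PMF.pure (some b) else PMF.pure none)) := by
  simp only [Real.toNNReal_mul hu0]
  exact PMF.bernoulli_bind_ite_bind_subsample _ _ (RR p q hp1 hq1 a)

/-- Arbitrary sampling around randomized response (Corollary 1, second equality):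
pre-sampling with probability `u`, then randomized response, then post-sampling with
probability `v` equals randomized response followed by post-sampling with probability `u*v`. -/
theorem presample_RR_postsample_eq_RR_postsample_mul
    (p q u v : ℝ) (hp0 : 0 ≤ p) (hp1 : p ≤ 1) (hq0 : 0 ≤ q) (hq1 : q ≤ 1)
    (hu0 : 0 ≤ u) (hu1 : u ≤ 1) (hv0 : 0 ≤ v) (hv1 : v ≤ 1) (a : Bool) :
    (PMF.bernoulli (Real.toNNReal u) (Real.toNNReal_le_one.mpr hu1)).bind
        (fun keep => if keep then
            (RR p q hp1 hq1 a).bind (fun b =>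
              (PMF.bernoulli (Real.toNNReal v) (Real.toNNReal_le_one.mpr hv1)).bind
                (fun keep2 => if keep2 then PMF.pure (some b) else PMF.pure none))
          else PMF.pure none)
      = (RR p q hp1 hq1 a).bind (fun b =>
          (PMF.bernoulli (Real.toNNReal (u * v))
              (Real.toNNReal_le_one.mpr (mul_le_one₀ hu1 hv0 hv1))).bind
            (fun keep => if keep then PMF.pure (some b) else PMF.pure none)) :=
  presample_RR_postsample_eq_RR_postsample_mul_general p q u v hp1 hq1 hu0 hu1 hv0 hv1 a
end

section
/- Privacy amplification by sampling, mixture form: let β be a type, P and W probability mass functions on β, ε ≥ 0 a real number, and s ∈ [0,1] a sampling probability. If P b ≤ e^ε · W b for all b : β, then the s-mixture of P and W satisfies, for all b : β, ((PMF.bernoulli s).bind (fun keep => if keep then P else W)) b ≤ (1 + s*(e^ε - 1)) * W b; that is, the mixture is ln(1+s(e^ε−1))-close to W in the pointwise multiplicative sense. -/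
set_option linter.deprecated false

open scoped NNReal ENNReal

namespace PMF

variable {β : Type*}

theorem bernoulli_bind_ite_apply (p : ℝ≥0) (h : p ≤ 1) (P W : PMF β) (b : β) :
    ((bernoulli p h).bind fun keep => if keep then P else W) b = (1 - p) * W b + p * P b := by
  simp only [bind_apply, tsum_bool, bernoulli_apply, cond_false, cond_true, ENNReal.coe_sub,
    ENNReal.coe_one, Bool.false_eq_true, if_false, if_true]

theorem bernoulli_bind_ite_apply_le (p : ℝ≥0) (h : p ≤ 1) {P W : PMF β} {c : ℝ≥0∞} {b : β}
    (hPW : P b ≤ c * W b) :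
    ((bernoulli p h).bind fun keep => if keep then P else W) b ≤ (1 - p + p * c) * W b :=
  calc _ = (1 - p) * W b + p * P b := bernoulli_bind_ite_apply p h P W b
    _ ≤ (1 - p) * W b + p * (c * W b) := by gcongr
    _ = (1 - p + p * c) * W b := by rw [add_mul, mul_assoc]

end PMF

theorem ENNReal.ofReal_one_add_mul_sub_one {s x : ℝ} (hs0 : 0 ≤ s) (hs1 : s ≤ 1) (hx : 0 ≤ x) :
    ENNReal.ofReal (1 + s * (x - 1)) = 1 - Real.toNNReal s + Real.toNNReal s * ENNReal.ofReal x := by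
  have hsplit : 1 + s * (x - 1) = (1 - s) + s * x := by ring
  rw [hsplit, ENNReal.ofReal_add (by linarith) (by positivity), ENNReal.ofReal_mul hs0,
    ENNReal.ofReal_sub _ hs0, ENNReal.ofReal_one]
  rfl

theorem mixture_amplification_general
    {β : Type*} (P W : PMF β) (ε : ℝ)
    (s : ℝ) (hs0 : 0 ≤ s) (hs1 : s ≤ 1)
    (hPW : ∀ b : β, P b ≤ ENNReal.ofReal (Real.exp ε) * W b) :
    ∀ b : β,
      ((PMF.bernoulli (Real.toNNReal s) (Real.toNNReal_le_one.mpr hs1)).bind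
          (fun keep => if keep then P else W)) b
        ≤ ENNReal.ofReal (1 + s * (Real.exp ε - 1)) * W b := by
  intro b
  rw [ENNReal.ofReal_one_add_mul_sub_one hs0 hs1 (Real.exp_nonneg ε)]
  exact PMF.bernoulli_bind_ite_apply_le _ _ (hPW b)

/-- Privacy amplification by sampling, mixture form: if `P` is pointwise dominated by
`e^ε · W`, then the `s`-mixture of `P` and `W` is pointwise dominated by
`(1 + s(e^ε − 1)) · W`. -/
theorem mixture_amplification
    {β : Type*} (P W : PMF β) (ε : ℝ) (hε : 0 ≤ ε)
    (s : ℝ) (hs0 : 0 ≤ s) (hs1 : s ≤ 1)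
    (hPW : ∀ b : β, P b ≤ ENNReal.ofReal (Real.exp ε) * W b) :
    ∀ b : β,
      ((PMF.bernoulli (Real.toNNReal s) (Real.toNNReal_le_one.mpr hs1)).bind
          (fun keep => if keep then P else W)) b
        ≤ ENNReal.ofReal (1 + s * (Real.exp ε - 1)) * W b :=
  mixture_amplification_general P W ε s hs0 hs1 hPW
end
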